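/- If u is a unicellular map of genus g+1 with n+1 edges such that 1 and α(1) lie in the same vertex (cycle of σ), then there exists k with 1 < k < α(1) and α(1) < α(k); i.e., the class of maps with 1 and α(1) in the same vertex and no such k is empty, so classes II and III in the partition of U_{g+1,n+1} do not overlap and cover all same-vertex cases. -/

import Mathlib

/-- Number of cycles of a permutation, counting fixed points as trivial cycles. -/
def cycleCount {β : Type*} [Fintype β] [DecidableEq β] (σ : Equiv.Perm β) : ℕ :=
  σ.cycleType.card + (Finset.univ.filter fun x => σ x = x).card

/-! Half-edges are numbered along the face, so `σ x = α (x + 1)`. If no edge `{k, α k}` with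
`0 < k < α 0` crosses the edge `{0, α 0}`, the arc `[0, α 0)` is closed under `σ`: from `x` in
the arc, `x + 1` is either `α 0`, which `α` sends back to `0`, or lies inside the arc, where `α`
stays below `α 0`. So the vertex of `0` never reaches `α 0`. -/

theorem Equiv.Perm.SameCycle.mem_of_mapsTo {β : Type*} [Finite β] {σ : Equiv.Perm β}
    {s : Set β} {x y : β} (hs : Set.MapsTo σ s s) (hxy : σ.SameCycle x y) (hx : x ∈ s) :
    y ∈ s := by
  obtain ⟨i, rfl⟩ := hxy.exists_nat_pow_eq
  rw [Equiv.Perm.coe_pow]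
  exact hs.iterate i hx

section UnicellularMap

variable {N : ℕ} {α σ : Equiv.Perm (Fin (N + 1))}

theorem apply_eq_apply_add_one_of_mul_eq_finRotate (hinv : Function.Involutive α)
    (hface : α * σ = finRotate (N + 1)) (x : Fin (N + 1)) : σ x = α (x + 1) := by
  rw [← finRotate_apply, ← hface, Equiv.Perm.mul_apply, hinv]

theorem mapsTo_Iio_apply_zero (hinv : Function.Involutive α) (hfpf : ∀ x, α x ≠ x)
    (hface : α * σ = finRotate (N + 1))
    (hnest : ∀ k : Fin (N + 1), 0 < (k : ℕ) → k < α 0 → α k ≤ α 0) :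
    Set.MapsTo σ (Set.Iio (α 0)) (Set.Iio (α 0)) := by
  intro x (hx : x < α 0)
  show σ x < α 0
  have hsucc : ((x + 1 : Fin (N + 1)) : ℕ) = x + 1 :=
    Fin.val_add_one_of_lt (hx.trans_le (Fin.le_last _))
  rw [apply_eq_apply_add_one_of_mul_eq_finRotate hinv hface]
  rcases (Fin.add_one_le_of_lt hx).eq_or_lt with hend | hinner
  · rw [hend, hinv]
    exact Fin.pos_iff_ne_zero.mpr (hfpf 0)
  · have hne : α (x + 1) ≠ α 0 := fun h => by
      have := congrArg Fin.val (hinv.injective h)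
      rw [hsucc, Fin.val_zero] at this
      omega
    exact (hnest _ (hsucc ▸ Nat.succ_pos _) hinner).lt_of_ne hne

theorem not_sameCycle_zero_apply_zero (hinv : Function.Involutive α) (hfpf : ∀ x, α x ≠ x)
    (hface : α * σ = finRotate (N + 1))
    (hnest : ∀ k : Fin (N + 1), 0 < (k : ℕ) → k < α 0 → α k ≤ α 0) :
    ¬ σ.SameCycle 0 (α 0) := fun h =>
  lt_irrefl (α 0) <| h.mem_of_mapsTo (s := Set.Iio (α 0))
    (mapsTo_Iio_apply_zero hinv hfpf hface hnest) (Fin.pos_iff_ne_zero.mpr (hfpf 0))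

end UnicellularMap

theorem stmt18 (n : ℕ) (α σ : Equiv.Perm (Fin (2 * (n + 1))))
    (hinv : ∀ x, α (α x) = x) (hfpf : ∀ x, α x ≠ x)
    (hface : α * σ = finRotate (2 * (n + 1)))
    (hsame : Equiv.Perm.SameCycle σ ⟨0, by omega⟩ (α ⟨0, by omega⟩)) :
    ∃ k : Fin (2 * (n + 1)), 0 < (k : ℕ) ∧ k < α ⟨0, by omega⟩ ∧
      α ⟨0, by omega⟩ < α k := by
  by_contra! hnest
  exact not_sameCycle_zero_apply_zero hinv hfpf hface hnest hsame
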